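/- Let q be a power of a prime p, let n ≥ 2, and let r be an integer with ⌈n/2⌉ ≤ r ≤ n-1, gcd(n,r) = 1, and n ≠ 2r, and set s := 2r - n + 1 (so s ≥ 2). Then the sequence (q^{s}, q^{r}+q^{s-1}, q^{r+1}+q, q^{r+s-1}+1) of positive integers is telescopic; consequently the numerical semigroup it generates is symmetric and has exactly q^r(q^{s}-1)/2 gaps. -/

import Mathlib

/-- `seqGcd a i = d_i = gcd(a_1, …, a_i)` (so `seqGcd a 0 = 0`). -/
def seqGcd (a : ℕ → ℕ) (i : ℕ) : ℕ := Finset.gcd (Finset.Icc 1 i) a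

/-- `seqSemigroup a i = S_i`, the submonoid of `ℕ` generated by `{a_1/d_i, …, a_i/d_i}`. -/
def seqSemigroup (a : ℕ → ℕ) (i : ℕ) : AddSubmonoid ℕ :=
  AddSubmonoid.closure ((fun j => a j / seqGcd a i) '' Set.Icc 1 i)

/-- The sequence `(a_1, …, a_m)` of positive integers with `gcd = 1` is telescopic. -/
def IsTelescopic (a : ℕ → ℕ) (m : ℕ) : Prop :=
  (∀ i, 1 ≤ i → i ≤ m → 0 < a i) ∧ seqGcd a m = 1 ∧
  ∀ i, 2 ≤ i → i ≤ m → a i / seqGcd a i ∈ seqSemigroup a (i - 1)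

/-!
The argument of Kirfel–Pellikaan. Write `d_i = gcd(a_1, …, a_i)`. For `i ≥ 2`,
`S_i = n S_{i-1} + ℕ b` with `n = d_{i-1}/d_i` and `b = a_i/d_i` coprime, and telescopicity says
`b ∈ S_{i-1}`. Every integer is uniquely `n y + c b` with `0 ≤ c < n`, and it lies in `S_i` iff
`y ∈ S_{i-1}`; since `F' - (n y + c b) = n (F - y) + (n - 1 - c) b` for `F' = n F + (n - 1) b`,
symmetry of `S_{i-1}` about `F` passes to symmetry of `S_i` about `F'`. Starting from `S_1 = ℕ`
(symmetric about `-1`) this yields `F(S_m) = ∑_{i ≥ 2} (d_{i-1}/d_i - 1) a_i - a_1`, and the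
involution `x ↦ F - x` of `[0, F]` exchanges gaps and elements, so `2 g = F + 1`. For the given
sequence `(d_1, d_2, d_3, d_4) = (q^s, q^{s-1}, q, 1)` and `F + 1 = q^r (q^s - 1)`.
-/

/-- Negative integers count as non-members, so `F = -1` describes `S = ℕ`, and for `F ≥ 0` this
says that `S` is a symmetric numerical semigroup with Frobenius number `F`. -/
def IsSymmetricAbout (S : AddSubmonoid ℕ) (F : ℤ) : Prop :=
  ∀ x : ℤ, x ∈ S.map (Nat.castAddMonoidHom ℤ) ↔ F - x ∉ S.map (Nat.castAddMonoidHom ℤ)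

lemma AddSubmonoid.natCast_mem_map_iff {S : AddSubmonoid ℕ} {n : ℕ} :
    (n : ℤ) ∈ S.map (Nat.castAddMonoidHom ℤ) ↔ n ∈ S :=
  AddSubmonoid.mem_map_iff_mem Nat.cast_injective

lemma AddSubmonoid.notMem_map_natCast_of_neg {S : AddSubmonoid ℕ} {x : ℤ} (hx : x < 0) :
    x ∉ S.map (Nat.castAddMonoidHom ℤ) := by
  rintro ⟨n, -, rfl⟩
  exact absurd hx (by simp)

lemma isSymmetricAbout_top : IsSymmetricAbout ⊤ (-1) := by
  intro x
  simp only [AddSubmonoid.mem_map, AddSubmonoid.mem_top, Nat.coe_castAddMonoidHom, true_and,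
    not_exists]
  exact ⟨fun ⟨n, hn⟩ m hm => by omega,
    fun h => ⟨x.toNat, by by_contra; exact h (-1 - x).toNat (by omega)⟩⟩

namespace IsSymmetricAbout

variable {S : AddSubmonoid ℕ} {F : ℕ}

lemma mem_of_lt (h : IsSymmetricAbout S F) {x : ℕ} (hx : F < x) : x ∈ S := by
  rw [← AddSubmonoid.natCast_mem_map_iff, h]
  exact AddSubmonoid.notMem_map_natCast_of_neg (by omega)

lemma mem_iff_sub_notMem (h : IsSymmetricAbout S F) {x : ℕ} (hx : x ≤ F) :
    x ∈ S ↔ F - x ∉ S := by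
  rw [← AddSubmonoid.natCast_mem_map_iff, h, ← AddSubmonoid.natCast_mem_map_iff, Nat.cast_sub hx]

lemma isGreatest_gaps (h : IsSymmetricAbout S F) : IsGreatest {x | x ∉ S} F := by
  refine ⟨?_, fun x hx => not_lt.1 fun hlt => hx (h.mem_of_lt hlt)⟩
  simpa using (h.mem_iff_sub_notMem (Nat.zero_le F)).1 S.zero_mem

lemma two_mul_ncard_gaps (h : IsSymmetricAbout S F) : 2 * {x | x ∉ S}.ncard = F + 1 := by
  classical
  have hgaps : {x | x ∉ S} = ↑((Finset.range (F + 1)).filter (· ∉ S)) := by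
    ext x
    simpa using fun hx => Nat.lt_succ_of_le (h.isGreatest_gaps.2 hx)
  have hreflect : ((Finset.range (F + 1)).filter (· ∉ S)).card
      = ((Finset.range (F + 1)).filter (· ∈ S)).card := by
    refine Finset.card_nbij' (F - ·) (F - ·) ?_ ?_ ?_ ?_ <;> intro x hx <;>
      simp only [Finset.coe_filter, Finset.mem_range, Set.mem_ofPred_eq] at hx ⊢
    · refine ⟨by omega, (h.mem_iff_sub_notMem (by omega)).2 ?_⟩
      rw [Nat.sub_sub_self (by omega)]
      exact hx.2
    · exact ⟨by omega, (h.mem_iff_sub_notMem (by omega)).1 hx.2⟩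
    all_goals omega
  rw [hgaps, Set.ncard_coe_finset, two_mul]
  nth_rw 2 [hreflect]
  simpa using Finset.card_filter_add_card_filter_not (s := Finset.range (F + 1)) (· ∉ S)

end IsSymmetricAbout

lemma Int.exists_eq_mul_add_mul_of_coprime {d b : ℕ} (hd : 0 < d) (hdb : d.Coprime b) (x : ℤ) :
    ∃ y c : ℤ, 0 ≤ c ∧ c < d ∧ x = d * y + c * b := by
  obtain ⟨u, v, huv⟩ := Nat.Coprime.isCoprime hdb
  have hd' : (0 : ℤ) < d := by exact_mod_cast hd
  refine ⟨x * u + x * v / d * b, x * v % d, Int.emod_nonneg _ hd'.ne', Int.emod_lt_of_pos _ hd',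
    ?_⟩
  linear_combination (-x) * huv - b * Int.emod_add_mul_ediv (x * v) d

section Gluing

variable {T S : AddSubmonoid ℕ} {d b : ℕ}
  (hS : ∀ x, x ∈ S ↔ ∃ y ∈ T, ∃ c : ℕ, d * y + c * b = x) (hb : b ∈ T) (hdb : d.Coprime b)
include hS hb hdb

lemma mem_map_iff_of_eq_mul_add_mul {x y c : ℤ} (hc : 0 ≤ c) (hcd : c < d)
    (hx : x = d * y + c * b) :
    x ∈ S.map (Nat.castAddMonoidHom ℤ) ↔ y ∈ T.map (Nat.castAddMonoidHom ℤ) := by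
  constructor
  · rintro ⟨m, hm, rfl⟩
    obtain ⟨n, hn, c', rfl⟩ := (hS m).1 hm
    simp only [Nat.coe_castAddMonoidHom, Nat.cast_add, Nat.cast_mul] at hx
    have hdvd : (d : ℤ) ∣ (c' - c) * b := ⟨y - n, by linear_combination hx⟩
    obtain ⟨k, hk⟩ := (Nat.Coprime.isCoprime hdb).dvd_of_dvd_mul_right hdvd
    have hk0 : 0 ≤ k := by nlinarith
    lift k to ℕ using hk0
    refine ⟨n + k * b, T.add_mem hn (T.nsmul_mem hb k), ?_⟩
    have hd0 : (d : ℤ) ≠ 0 := by omega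
    apply mul_left_cancel₀ hd0
    simp only [Nat.coe_castAddMonoidHom, Nat.cast_add, Nat.cast_mul]
    linear_combination hx - b * hk
  · rintro ⟨n, hn, rfl⟩
    lift c to ℕ using hc
    exact ⟨d * n + c * b, (hS _).2 ⟨n, hn, c, rfl⟩, by simp [hx]⟩

theorem IsSymmetricAbout.glue (hd : 0 < d) {F : ℤ} (hT : IsSymmetricAbout T F) :
    IsSymmetricAbout S (d * F + (d - 1) * b) := by
  intro x
  obtain ⟨y, c, hc, hcd, hx⟩ := Int.exists_eq_mul_add_mul_of_coprime hd hdb x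
  rw [mem_map_iff_of_eq_mul_add_mul hS hb hdb hc hcd hx, hT,
    mem_map_iff_of_eq_mul_add_mul hS hb hdb (c := d - 1 - c) (y := F - y) (by omega) (by omega)
      (by rw [hx]; ring)]

end Gluing

lemma Nat.div_eq_div_mul_div {a b c : ℕ} (hcb : c ∣ b) (hba : b ∣ a) :
    a / c = b / c * (a / b) := by
  obtain ⟨k, rfl⟩ := hba
  obtain ⟨l, rfl⟩ := hcb
  rcases Nat.eq_zero_or_pos c with rfl | hc
  · simp
  rcases Nat.eq_zero_or_pos l with rfl | hl
  · simp
  rw [Nat.mul_div_cancel_left _ hc, Nat.mul_div_cancel_left _ (Nat.mul_pos hc hl),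
    Nat.mul_assoc, Nat.mul_div_cancel_left _ hc]

section Telescopic

variable {a : ℕ → ℕ}

lemma seqGcd_one : seqGcd a 1 = a 1 := by simp [seqGcd]

lemma seqGcd_add_one (i : ℕ) : seqGcd a (i + 1) = Nat.gcd (seqGcd a i) (a (i + 1)) := by
  rw [seqGcd, ← Finset.insert_Icc_right_eq_Icc_add_one (by omega), Finset.gcd_insert, gcd_comm]
  rfl

lemma seqGcd_dvd {i j : ℕ} (h1 : 1 ≤ j) (hi : j ≤ i) : seqGcd a i ∣ a j :=
  Finset.gcd_dvd (Finset.mem_Icc.2 ⟨h1, hi⟩)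

lemma seqSemigroup_one (h : 0 < a 1) : seqSemigroup a 1 = ⊤ := by
  refine eq_top_iff.2 fun x _ => ?_
  simp [seqSemigroup, seqGcd_one, Nat.div_self h]

lemma mem_seqSemigroup_add_one_iff {i x : ℕ} :
    x ∈ seqSemigroup a (i + 1) ↔ ∃ y ∈ seqSemigroup a i, ∃ c : ℕ,
      seqGcd a i / seqGcd a (i + 1) * y + c * (a (i + 1) / seqGcd a (i + 1)) = x := by
  have hdvd : seqGcd a (i + 1) ∣ seqGcd a i := seqGcd_add_one i ▸ Nat.gcd_dvd_left _ _
  have himage : (fun j => a j / seqGcd a (i + 1)) '' Set.Icc 1 (i + 1)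
      = AddMonoidHom.mulLeft (seqGcd a i / seqGcd a (i + 1)) ''
          ((fun j => a j / seqGcd a i) '' Set.Icc 1 i) ∪ {a (i + 1) / seqGcd a (i + 1)} := by
    rw [← Set.insert_Icc_right_eq_Icc_add_one (by omega), Set.image_insert_eq, Set.image_image,
      Set.insert_eq, Set.union_comm]
    congr 1
    exact Set.image_congr fun j hj => Nat.div_eq_div_mul_div hdvd (seqGcd_dvd hj.1 hj.2)
  rw [seqSemigroup, himage, AddSubmonoid.closure_union, ← AddMonoidHom.map_mclosure,
    AddSubmonoid.mem_sup]
  simp only [AddSubmonoid.mem_map, AddSubmonoid.mem_closure_singleton, smul_eq_mul,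
    AddMonoidHom.coe_mulLeft]
  constructor
  · rintro ⟨_, ⟨y, hy, rfl⟩, _, ⟨c, rfl⟩, rfl⟩
    exact ⟨y, hy, c, rfl⟩
  · rintro ⟨y, hy, c, rfl⟩
    exact ⟨_, ⟨y, hy, rfl⟩, _, ⟨c, rfl⟩, rfl⟩

theorem IsTelescopic.isSymmetricAbout {m : ℕ} (h : IsTelescopic a m) :
    IsSymmetricAbout (seqSemigroup a m)
      (∑ j ∈ Finset.Icc 2 m, (((seqGcd a (j - 1) / seqGcd a j : ℕ) : ℤ) - 1) * a j - a 1) := by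
  obtain ⟨hpos, hgcd, htel⟩ := h
  have hm : 1 ≤ m := Nat.one_le_iff_ne_zero.2 fun h0 => by simp [h0, seqGcd] at hgcd
  suffices ∀ i, 1 ≤ i → i ≤ m → ∃ F : ℤ, IsSymmetricAbout (seqSemigroup a i) F ∧
      seqGcd a i * F
        = ∑ j ∈ Finset.Icc 2 i, (((seqGcd a (j - 1) / seqGcd a j : ℕ) : ℤ) - 1) * a j - a 1 by
    obtain ⟨F, hsym, hF⟩ := this m hm le_rfl
    rwa [← hF, hgcd, Nat.cast_one, one_mul]
  intro i hi
  induction i, hi using Nat.le_induction with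
  | base =>
    intro h1m
    exact ⟨-1, seqSemigroup_one (hpos 1 le_rfl h1m) ▸ isSymmetricAbout_top, by simp [seqGcd_one]⟩
  | succ i hi ih =>
    intro hi'
    obtain ⟨F, hsym, hF⟩ := ih (by omega)
    have hgcd_succ := seqGcd_add_one (a := a) i
    have hdvd_left : seqGcd a (i + 1) ∣ seqGcd a i := hgcd_succ ▸ Nat.gcd_dvd_left _ _
    have hdvd_right : seqGcd a (i + 1) ∣ a (i + 1) := hgcd_succ ▸ Nat.gcd_dvd_right _ _
    have hd_pos : 0 < seqGcd a i :=
      Nat.pos_of_dvd_of_pos (seqGcd_dvd le_rfl hi) (hpos 1 le_rfl (by omega))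
    have hd'_pos : 0 < seqGcd a (i + 1) :=
      Nat.pos_of_dvd_of_pos (seqGcd_dvd le_rfl (by omega)) (hpos 1 le_rfl (by omega))
    have hcop : (seqGcd a i / seqGcd a (i + 1)).Coprime (a (i + 1) / seqGcd a (i + 1)) :=
      hgcd_succ ▸ Nat.coprime_div_gcd_div_gcd (hgcd_succ ▸ hd'_pos)
    have hn_pos : 0 < seqGcd a i / seqGcd a (i + 1) :=
      Nat.div_pos (Nat.le_of_dvd hd_pos hdvd_left) hd'_pos
    refine ⟨_, hsym.glue (fun _ => mem_seqSemigroup_add_one_iff)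
      (htel (i + 1) (by omega) hi') hcop hn_pos, ?_⟩
    rw [Finset.sum_Icc_succ_top (by omega), Nat.add_sub_cancel]
    have hn : (seqGcd a (i + 1) : ℤ) * (seqGcd a i / seqGcd a (i + 1) : ℕ) = seqGcd a i := by
      exact_mod_cast Nat.mul_div_cancel' hdvd_left
    have hb : (seqGcd a (i + 1) : ℤ) * (a (i + 1) / seqGcd a (i + 1) : ℕ) = a (i + 1) := by
      exact_mod_cast Nat.mul_div_cancel' hdvd_right
    linear_combination F * hn + hF + (((seqGcd a i / seqGcd a (i + 1) : ℕ) : ℤ) - 1) * hb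

end Telescopic

lemma Nat.coprime_self_pow_add_one (q k : ℕ) : Nat.Coprime q (q ^ (k + 1) + 1) := by
  rw [pow_succ, add_comm, Nat.coprime_add_mul_right_right]
  exact Nat.coprime_one_right q

section Subcover

-- `s = t + 2` and `r = t + 2 + u`, so that the exponents involve no truncated subtraction.
variable {q t u : ℕ} {a : ℕ → ℕ} (hq : 0 < q) (ha1 : a 1 = q ^ (t + 2))
  (ha2 : a 2 = q ^ (t + 2 + u) + q ^ (t + 1)) (ha3 : a 3 = q ^ (t + 3 + u) + q)
  (ha4 : a 4 = q ^ (2 * t + u + 3) + 1)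
include ha1 ha2 ha3 ha4

lemma seqGcd_subcover : seqGcd a 2 = q ^ (t + 1) ∧ seqGcd a 3 = q ∧ seqGcd a 4 = 1 := by
  have h2 : seqGcd a 2 = q ^ (t + 1) := by
    rw [seqGcd_add_one, seqGcd_one, ha1, ha2,
      show q ^ (t + 2) = q ^ (t + 1) * q by ring,
      show q ^ (t + 2 + u) + q ^ (t + 1) = q ^ (t + 1) * (q ^ (u + 1) + 1) by ring,
      Nat.gcd_mul_left, Nat.coprime_self_pow_add_one, mul_one]
  have h3 : seqGcd a 3 = q := by
    rw [seqGcd_add_one, h2, ha3, show q ^ (t + 1) = q * q ^ t by ring,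
      show q ^ (t + 3 + u) + q = q * (q ^ (t + 1 + u + 1) + 1) by ring,
      Nat.gcd_mul_left, (Nat.coprime_self_pow_add_one q _).pow_left, mul_one]
  refine ⟨h2, h3, ?_⟩
  rw [seqGcd_add_one, h3, ha4, show 2 * t + u + 3 = 2 * t + u + 2 + 1 by ring]
  exact Nat.coprime_self_pow_add_one q _

include hq

lemma seqGcd_div_subcover : seqGcd a 1 / seqGcd a 2 = q ∧ seqGcd a 2 / seqGcd a 3 = q ^ t ∧
    seqGcd a 3 / seqGcd a 4 = q := by
  obtain ⟨hd2, hd3, hd4⟩ := seqGcd_subcover ha1 ha2 ha3 ha4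
  rw [seqGcd_one, ha1, hd2, hd3, hd4, Nat.div_one]
  exact ⟨Nat.div_eq_of_eq_mul_right (by positivity) (by ring),
    Nat.div_eq_of_eq_mul_right hq (by ring), rfl⟩

lemma isTelescopic_subcover : IsTelescopic a 4 := by
  obtain ⟨hd2, hd3, hd4⟩ := seqGcd_subcover ha1 ha2 ha3 ha4
  obtain ⟨hq21, hq32, -⟩ := seqGcd_div_subcover hq ha1 ha2 ha3 ha4
  have hS1 : seqSemigroup a 1 = ⊤ := seqSemigroup_one (ha1 ▸ by positivity)
  have hone : 1 ≤ q ^ (t + 1) := Nat.one_le_pow _ _ hq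
  have hb2 : a 2 / seqGcd a 2 = q ^ (u + 1) + 1 := by
    rw [ha2, hd2]; exact Nat.div_eq_of_eq_mul_right (by positivity) (by ring)
  have hb3 : a 3 / seqGcd a 3 = q ^ (t + 2 + u) + 1 := by
    rw [ha3, hd3]; exact Nat.div_eq_of_eq_mul_right hq (by ring)
  have hS2 {y : ℕ} : q * y ∈ seqSemigroup a 2 :=
    mem_seqSemigroup_add_one_iff.2 ⟨y, hS1 ▸ AddSubmonoid.mem_top y, 0, by rw [hq21]; ring⟩
  have hb3_mem : q ^ (t + 2 + u) + 1 ∈ seqSemigroup a 2 := by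
    refine mem_seqSemigroup_add_one_iff.2
      ⟨q ^ u * (q ^ (t + 1) - 1), hS1 ▸ AddSubmonoid.mem_top _, 1, ?_⟩
    rw [hq21, hb2]; zify [hone]; ring
  have hb4_mem : q ^ (2 * t + u + 3) + 1 ∈ seqSemigroup a 3 := by
    refine mem_seqSemigroup_add_one_iff.2 ⟨q * (q ^ (u + 1) * (q ^ (t + 1) - 1)), hS2, 1, ?_⟩
    rw [hq32, hb3]; zify [hone]; ring
  refine ⟨fun i h1 h4 => ?_, hd4, fun i h2 h4 => ?_⟩ <;> interval_cases i
  · rw [ha1]; positivity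
  · rw [ha2]; positivity
  · rw [ha3]; positivity
  · rw [ha4]; positivity
  · exact hS1 ▸ AddSubmonoid.mem_top _
  · rwa [hb3]
  · rwa [hd4, Nat.div_one, ha4]

lemma frobenius_subcover :
    ∑ j ∈ Finset.Icc 2 4, (((seqGcd a (j - 1) / seqGcd a j : ℕ) : ℤ) - 1) * a j - a 1
      = (q : ℤ) ^ (t + 2 + u) * ((q : ℤ) ^ (t + 2) - 1) - 1 := by
  obtain ⟨hq21, hq32, hq43⟩ := seqGcd_div_subcover hq ha1 ha2 ha3 ha4
  simp only [Finset.sum_Icc_succ_top (show 2 ≤ 3 + 1 by omega),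
    Finset.sum_Icc_succ_top (show 2 ≤ 2 + 1 by omega), Finset.Icc_self, Finset.sum_singleton]
  simp only [Nat.reduceAdd, Nat.add_one_sub_one, hq21, hq32, hq43, ha1, ha2, ha3, ha4]
  push_cast
  ring

end Subcover

theorem weierstrass_semigroup_subcover_telescopic_general
    (p q e n r s : ℕ) (hp : p.Prime) (he : 0 < e) (hq : q = p ^ e)
    (hr1 : n ≤ 2 * r) (hr2 : r ≤ n - 1)
    (hn2r : n ≠ 2 * r) (hs : s = 2 * r + 1 - n)
    (a : ℕ → ℕ)
    (ha1 : a 1 = q ^ s)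
    (ha2 : a 2 = q ^ r + q ^ (s - 1))
    (ha3 : a 3 = q ^ (r + 1) + q)
    (ha4 : a 4 = q ^ (r + s - 1) + 1) :
    IsTelescopic a 4 ∧
    2 * Set.ncard {x : ℕ | x ∉ seqSemigroup a 4} = q ^ r * (q ^ s - 1) ∧
    ∃ l : ℕ, IsGreatest {x : ℕ | x ∉ seqSemigroup a 4} l ∧
      l + 1 = 2 * Set.ncard {x : ℕ | x ∉ seqSemigroup a 4} := by
  have hq2 : 2 ≤ q := hq ▸ Nat.one_lt_pow he.ne' hp.one_lt
  obtain ⟨t, rfl⟩ : ∃ t, s = t + 2 := ⟨s - 2, by omega⟩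
  obtain ⟨u, rfl⟩ : ∃ u, r = t + 2 + u := ⟨r - (t + 2), by omega⟩
  rw [show t + 2 - 1 = t + 1 by omega] at ha2
  rw [show t + 2 + u + 1 = t + 3 + u by omega] at ha3
  rw [show t + 2 + u + (t + 2) - 1 = 2 * t + u + 3 by omega] at ha4
  have htel := isTelescopic_subcover (by omega) ha1 ha2 ha3 ha4
  have hq_pow : 1 ≤ q ^ (t + 2) := Nat.one_le_pow _ _ (by omega)
  have hpos : 1 ≤ q ^ (t + 2 + u) * (q ^ (t + 2) - 1) :=
    Nat.one_le_iff_ne_zero.2 (mul_ne_zero (by positivity)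
      (Nat.sub_ne_zero_of_lt (Nat.one_lt_pow (by omega) hq2)))
  have hsym := htel.isSymmetricAbout
  rw [frobenius_subcover (by omega) ha1 ha2 ha3 ha4,
    show (q : ℤ) ^ (t + 2 + u) * ((q : ℤ) ^ (t + 2) - 1) - 1
      = ((q ^ (t + 2 + u) * (q ^ (t + 2) - 1) - 1 : ℕ) : ℤ) by
        rw [Nat.cast_sub hpos, Nat.cast_mul, Nat.cast_sub hq_pow]; push_cast; ring] at hsym
  exact ⟨htel, by rw [hsym.two_mul_ncard_gaps]; omega, _, hsym.isGreatest_gaps,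
    hsym.two_mul_ncard_gaps.symm⟩

/-- Theorem 3.4 (`Teo HP`), case `s = 2r - n + 1`, `u = n - r - 1`: the sequence
`(q^s, q^r+q^{s-1}, q^{r+1}+q, q^{r+s-1}+1)` is telescopic; the numerical semigroup it
generates is symmetric with exactly `q^r(q^s-1)/2` gaps (stated as `2·g = q^r(q^s-1)`
and largest gap `= 2g-1`). -/
theorem weierstrass_semigroup_subcover_telescopic
    (p q e n r s : ℕ) (hp : p.Prime) (he : 0 < e) (hq : q = p ^ e)
    (hn : 2 ≤ n) (hr1 : n ≤ 2 * r) (hr2 : r ≤ n - 1) (hgcd : Nat.gcd n r = 1)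
    (hn2r : n ≠ 2 * r) (hs : s = 2 * r + 1 - n)
    (a : ℕ → ℕ)
    (ha1 : a 1 = q ^ s)
    (ha2 : a 2 = q ^ r + q ^ (s - 1))
    (ha3 : a 3 = q ^ (r + 1) + q)
    (ha4 : a 4 = q ^ (r + s - 1) + 1) :
    IsTelescopic a 4 ∧
    2 * Set.ncard {x : ℕ | x ∉ seqSemigroup a 4} = q ^ r * (q ^ s - 1) ∧
    ∃ l : ℕ, IsGreatest {x : ℕ | x ∉ seqSemigroup a 4} l ∧
      l + 1 = 2 * Set.ncard {x : ℕ | x ∉ seqSemigroup a 4} :=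
  weierstrass_semigroup_subcover_telescopic_general p q e n r s hp he hq hr1 hr2 hn2r hs a ha1 ha2
    ha3 ha4
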